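/- arXiv:1505.03256 — 2 statements merged into one kernel-verified Lean document; each statement's English description precedes it below -/
import Mathlib

section
/- Let N be a finite set, let 𝓕 be a nonempty family of subsets of N, and let 𝓖 = {G₁, …, G_m} be a family of subsets of N such that each element of N appears in at least k members of 𝓖. For each 1 ≤ j ≤ m define 𝓕_j = { F ∩ G_j : F ∈ 𝓕 }. Then for every α ≥ 1: k · ln_α|𝓕| ≤ Σ_{j=1}^m ln_α|𝓕_j|. -/
open Finset

/-- The α-logarithm: `ln_α(ξ) = (ξ^(1-α) - 1)/(1-α)` for `α ≠ 1`, and `ln ξ` for `α = 1`. -/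
noncomputable def alphaLog (α ξ : ℝ) : ℝ :=
  if α = 1 then Real.log ξ else (ξ ^ (1 - α) - 1) / (1 - α)

/-- The Tsallis–Havrda–Charvát entropy of order `α` of a pmf `p` on a finite set. -/
noncomputable def thc (α : ℝ) {S : Type*} [Fintype S] (p : S → ℝ) : ℝ :=
  if α = 1 then -∑ s, p s * Real.log (p s)
  else ((∑ s, p s ^ α) - 1) / (1 - α)

/-- The binary THC entropy `h_α(q)`. -/
noncomputable def binThc (α q : ℝ) : ℝ :=
  if α = 1 then -(q * Real.log q) - (1 - q) * Real.log (1 - q)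
  else (q ^ α + (1 - q) ^ α - 1) / (1 - α)

/-- First conditional THC entropy (Daróczy form): `H_α(X|Y) = Σ_y p(y)^α H_α(X|y)`,
where `p` is the joint pmf of `(X, Y)`.  (Terms with `p(y) = 0` vanish for `α > 0`.) -/
noncomputable def condThc1 (α : ℝ) {SX SY : Type*} [Fintype SX] [Fintype SY]
    (p : SX × SY → ℝ) : ℝ :=
  ∑ y, (∑ x, p (x, y)) ^ α * thc α (fun x => p (x, y) / ∑ x', p (x', y))

/-- Second conditional THC entropy: `H̃_α(X|Y) = Σ_y p(y) H_α(X|y)`,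
where `p` is the joint pmf of `(X, Y)`.  (Terms with `p(y) = 0` vanish.) -/
noncomputable def condThc2 (α : ℝ) {SX SY : Type*} [Fintype SX] [Fintype SY]
    (p : SX × SY → ℝ) : ℝ :=
  ∑ y, (∑ x, p (x, y)) * thc α (fun x => p (x, y) / ∑ x', p (x', y))

/-- The pmf of a random variable `X` defined on a finite sample space with pmf `μ`. -/
noncomputable def distOf {Ω S : Type*} [Fintype Ω] [DecidableEq S]
    (μ : Ω → ℝ) (X : Ω → S) : S → ℝ :=
  fun s => ∑ ω ∈ Finset.univ.filter (fun ω => X ω = s), μ ω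

open Real

/-!
Shearer's inequality in product form, `|𝓕| ^ k ≤ ∏ⱼ |𝓕ⱼ|`, is proved by induction on the ground
set. Removing a point `x` splits `𝓕` into the sets avoiding `x` and the sets containing it (with `x`
deleted); the traces on `Gⱼ` split in the same way whenever `x ∈ Gⱼ`, and for the other `j` each
part only has fewer traces. The two inductive bounds recombine through superadditivity of the
geometric mean, taken over `k` of the indices `j` with `x ∈ Gⱼ`.

Taking logarithms gives `k L ≤ ∑ⱼ Lⱼ` with `L = ln |𝓕|` and `Lⱼ = ln |𝓕ⱼ| ∈ [0, L]`. For `α ≥ 1`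
the function `t ↦ ln_α (exp t)` is concave and vanishes at `0`, so on `[0, L]` it lies above its
chord, and summing the chord bounds gives the claim.
-/

lemma prod_rpow_inv_card_add_le {ι : Type*} {s : Finset ι} (hs : s.Nonempty) {a b : ι → ℝ}
    (ha : ∀ j ∈ s, 0 ≤ a j) (hb : ∀ j ∈ s, 0 ≤ b j) :
    (∏ j ∈ s, a j) ^ (#s : ℝ)⁻¹ + (∏ j ∈ s, b j) ^ (#s : ℝ)⁻¹ ≤
      (∏ j ∈ s, (a j + b j)) ^ (#s : ℝ)⁻¹ := by
  set r : ℝ := (#s : ℝ)⁻¹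
  have hr : 0 < r := by positivity
  have hab : ∀ j ∈ s, 0 ≤ a j + b j := fun j hj => add_nonneg (ha j hj) (hb j hj)
  by_cases hzero : ∃ j ∈ s, a j + b j = 0
  · obtain ⟨j, hj, hj0⟩ := hzero
    have hprod (f : ι → ℝ) (hf : f j = 0) : (∏ i ∈ s, f i) ^ r = 0 := by
      rw [prod_eq_zero hj hf, zero_rpow hr.ne']
    rw [hprod a (by linarith [ha j hj, hb j hj]), hprod b (by linarith [ha j hj, hb j hj]),
      add_zero]
    exact rpow_nonneg (prod_nonneg hab) r
  push Not at hzero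
  have hpos : ∀ j ∈ s, 0 < a j + b j := fun j hj => (hab j hj).lt_of_ne' (hzero j hj)
  have hD : 0 < (∏ j ∈ s, (a j + b j)) ^ r := rpow_pos_of_pos (prod_pos hpos) r
  have hweights : ∑ _j ∈ s, r = 1 := by
    simp only [sum_const, nsmul_eq_mul, r]
    field_simp
  -- weighted AM-GM applied to the proportions `a j / (a j + b j)` and `b j / (a j + b j)`
  have amgm (f : ι → ℝ) (hf : ∀ j ∈ s, 0 ≤ f j) :
      (∏ j ∈ s, f j) ^ r / (∏ j ∈ s, (a j + b j)) ^ r ≤ ∑ j ∈ s, r * (f j / (a j + b j)) := by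
    have hfrac : ∀ j ∈ s, 0 ≤ f j / (a j + b j) := fun j hj => div_nonneg (hf j hj) (hab j hj)
    rw [← div_rpow (prod_nonneg hf) (prod_nonneg hab), ← prod_div_distrib,
      ← finsetProd_rpow s _ hfrac]
    exact geom_mean_le_arith_mean_weighted s _ _ (fun _ _ => hr.le) hweights hfrac
  have hsum : ∑ j ∈ s, r * (a j / (a j + b j)) + ∑ j ∈ s, r * (b j / (a j + b j)) = 1 := by
    rw [← sum_add_distrib, ← hweights]
    refine sum_congr rfl fun j hj => ?_
    field_simp [(hpos j hj).ne']
  rw [← div_le_one hD, add_div, ← hsum]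
  exact add_le_add (amgm a ha) (amgm b hb)

lemma add_pow_le_prod_of_pow_le_prod {ι : Type*} [Fintype ι] [DecidableEq ι] {k : ℕ}
    (hk : 0 < k) {T : Finset ι} (hT : k ≤ #T) {a b c : ι → ℝ} (ha : ∀ j, 0 ≤ a j)
    (hb : ∀ j, 0 ≤ b j) (habc : ∀ j ∈ T, a j + b j ≤ c j) (hac : ∀ j, a j ≤ c j)
    (hbc : ∀ j, b j ≤ c j) {A B : ℝ} (hA : 0 ≤ A) (hB : 0 ≤ B)
    (hAa : A ^ k ≤ ∏ j, a j) (hBb : B ^ k ≤ ∏ j, b j) :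
    (A + B) ^ k ≤ ∏ j, c j := by
  -- the geometric mean is taken over `k` indices of `T`; the remaining factors are bounded by `c`
  obtain ⟨T', hT'T, hT'k⟩ := exists_subset_card_eq hT
  have hT' : T'.Nonempty := card_pos.1 (hT'k ▸ hk)
  have hc : ∀ j, 0 ≤ c j := fun j => (ha j).trans (hac j)
  set r : ℝ := (k : ℝ)⁻¹
  have hk' : (0 : ℝ) < k := by exact_mod_cast hk
  have root {Y X : ℝ} (hY : 0 ≤ Y) (hX : 0 ≤ X) : Y ≤ X ^ r ↔ Y ^ k ≤ X := by
    rw [le_rpow_inv_iff_of_pos hY hX hk', rpow_natCast]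
  set P := ∏ j ∈ T'ᶜ, c j
  have hP : 0 ≤ P := prod_nonneg fun j _ => hc j
  have bound {Y : ℝ} {f : ι → ℝ} (hY : 0 ≤ Y) (hf : ∀ j, 0 ≤ f j) (hfc : ∀ j, f j ≤ c j)
      (hYf : Y ^ k ≤ ∏ j, f j) : Y ≤ (∏ j ∈ T', f j) ^ r * P ^ r := by
    have hfT' : 0 ≤ ∏ j ∈ T', f j := prod_nonneg fun j _ => hf j
    rw [← mul_rpow hfT' hP, root hY (mul_nonneg hfT' hP)]
    refine hYf.trans ?_
    rw [← prod_mul_prod_compl T' f]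
    exact mul_le_mul_of_nonneg_left
      (prod_le_prod (fun j _ => hf j) fun j _ => hfc j) hfT'
  have hsuper := prod_rpow_inv_card_add_le hT' (fun j _ => ha j) (fun j _ => hb j)
  rw [hT'k] at hsuper
  have hsum : A + B ≤ (∏ j, c j) ^ r :=
    calc A + B ≤ (∏ j ∈ T', a j) ^ r * P ^ r + (∏ j ∈ T', b j) ^ r * P ^ r :=
          add_le_add (bound hA ha hac hAa) (bound hB hb hbc hBb)
      _ = ((∏ j ∈ T', a j) ^ r + (∏ j ∈ T', b j) ^ r) * P ^ r := by ring
      _ ≤ (∏ j ∈ T', (a j + b j)) ^ r * P ^ r := by gcongr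
      _ = ((∏ j ∈ T', (a j + b j)) * P) ^ r :=
          (mul_rpow (prod_nonneg fun j _ => add_nonneg (ha j) (hb j)) hP).symm
      _ ≤ (∏ j, c j) ^ r := by
          rw [← prod_mul_prod_compl T' c]
          refine rpow_le_rpow (mul_nonneg (prod_nonneg fun j _ => add_nonneg (ha j) (hb j)) hP)
            (mul_le_mul_of_nonneg_right ?_ hP) (by positivity)
          exact prod_le_prod (fun j _ => add_nonneg (ha j) (hb j)) fun j hj => habc j (hT'T hj)
  exact (root (add_nonneg hA hB) (prod_nonneg fun j _ => hc j)).1 hsum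

namespace Finset

variable {N : Type*} [DecidableEq N] {F : Finset (Finset N)} {G : Finset N} {x : N}

lemma nonMemberSubfamily_image_inter (hx : x ∈ G) :
    (F.image (· ∩ G)).nonMemberSubfamily x = (F.nonMemberSubfamily x).image (· ∩ G) := by
  simp only [nonMemberSubfamily, filter_image, mem_inter, hx, and_true]

lemma memberSubfamily_image_inter (hx : x ∈ G) :
    (F.image (· ∩ G)).memberSubfamily x = (F.memberSubfamily x).image (· ∩ G) := by
  simp only [memberSubfamily, filter_image, image_image, mem_inter, hx, and_true]
  refine image_congr fun A _ => ?_
  simp [erase_inter]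

lemma image_inter_memberSubfamily_subset (hx : x ∉ G) :
    (F.memberSubfamily x).image (· ∩ G) ⊆ F.image (· ∩ G) := by
  intro B hB
  obtain ⟨A, hA, rfl⟩ := mem_image.1 hB
  exact mem_image.2 ⟨insert x A, (mem_memberSubfamily.1 hA).1, insert_inter_of_notMem hx⟩

lemma card_image_inter_memberSubfamily_add_card_image_inter_nonMemberSubfamily (hx : x ∈ G) :
    #((F.memberSubfamily x).image (· ∩ G)) + #((F.nonMemberSubfamily x).image (· ∩ G)) =
      #(F.image (· ∩ G)) := by
  rw [← memberSubfamily_image_inter hx, ← nonMemberSubfamily_image_inter hx,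
    card_memberSubfamily_add_card_nonMemberSubfamily]

lemma card_image_inter_memberSubfamily_le :
    #((F.memberSubfamily x).image (· ∩ G)) ≤ #(F.image (· ∩ G)) := by
  by_cases hx : x ∈ G
  · exact (Nat.le_add_right _ _).trans
      (card_image_inter_memberSubfamily_add_card_image_inter_nonMemberSubfamily hx).le
  · exact card_le_card (image_inter_memberSubfamily_subset hx)

lemma card_image_inter_nonMemberSubfamily_le :
    #((F.nonMemberSubfamily x).image (· ∩ G)) ≤ #(F.image (· ∩ G)) :=
  card_le_card (image_subset_image fun _ hA => (mem_nonMemberSubfamily.1 hA).1)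

end Finset

section Shearer

variable {N ι : Type*} [DecidableEq N] [Fintype ι] [DecidableEq ι]

lemma card_pow_le_prod_card_image_inter_of_subset {k : ℕ} (hk : 0 < k) (G : ι → Finset N)
    {S : Finset N} (hcov : ∀ x ∈ S, k ≤ #{j | x ∈ G j}) {F : Finset (Finset N)}
    (hFS : ∀ A ∈ F, A ⊆ S) :
    #F ^ k ≤ ∏ j, #(F.image (· ∩ G j)) := by
  induction S using Finset.induction_on generalizing F with
  | empty =>
    obtain rfl | rfl : F = ∅ ∨ F = {∅} :=
      subset_singleton_iff.1 fun A hA => mem_singleton.2 (subset_empty.1 (hFS A hA))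
    · simp [hk.ne']
    · simp
  | insert x S hxS ih =>
    have hcovS : ∀ y ∈ S, k ≤ #{j | y ∈ G j} := fun y hy => hcov y (mem_insert_of_mem hy)
    have hmem := ih hcovS (F := F.memberSubfamily x) fun A hA =>
      (insert_subset_insert_iff (mem_memberSubfamily.1 hA).2).1 (hFS _ (mem_memberSubfamily.1 hA).1)
    have hnon := ih hcovS (F := F.nonMemberSubfamily x) fun A hA =>
      (subset_insert_iff_of_notMem (mem_nonMemberSubfamily.1 hA).2).1
        (hFS _ (mem_nonMemberSubfamily.1 hA).1)
    rw [← card_memberSubfamily_add_card_nonMemberSubfamily x F]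
    have := add_pow_le_prod_of_pow_le_prod hk (hcov x (mem_insert_self x S))
      (a := fun j => (#((F.memberSubfamily x).image (· ∩ G j)) : ℝ))
      (b := fun j => (#((F.nonMemberSubfamily x).image (· ∩ G j)) : ℝ))
      (c := fun j => (#(F.image (· ∩ G j)) : ℝ))
      (fun _ => Nat.cast_nonneg _) (fun _ => Nat.cast_nonneg _)
      (fun j hj => by
        exact_mod_cast (card_image_inter_memberSubfamily_add_card_image_inter_nonMemberSubfamily
          (mem_filter.1 hj).2).le)
      (fun _ => by exact_mod_cast card_image_inter_memberSubfamily_le)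
      (fun _ => by exact_mod_cast card_image_inter_nonMemberSubfamily_le)
      (Nat.cast_nonneg _) (Nat.cast_nonneg _) (by exact_mod_cast hmem) (by exact_mod_cast hnon)
    exact_mod_cast this

lemma card_pow_le_prod_card_image_inter [Fintype N] (k : ℕ) (G : ι → Finset N)
    (hcov : ∀ x, k ≤ #{j | x ∈ G j}) {F : Finset (Finset N)} (hF : F.Nonempty) :
    #F ^ k ≤ ∏ j, #(F.image (· ∩ G j)) := by
  rcases k.eq_zero_or_pos with rfl | hk
  · exact prod_pos fun j _ => (hF.image _).card_pos
  · exact card_pow_le_prod_card_image_inter_of_subset hk G (fun x _ => hcov x)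
      fun A _ => subset_univ A

end Shearer

lemma ConcaveOn.mul_le_sum_comp_of_mul_le_sum {φ : ℝ → ℝ} {L : ℝ} (hL : 0 ≤ L)
    (hφ : ConcaveOn ℝ (Set.Icc 0 L) φ) (hφ0 : φ 0 = 0) (hφL : 0 ≤ φ L) {ι : Type*} {s : Finset ι}
    {t : ι → ℝ} (ht : ∀ j ∈ s, t j ∈ Set.Icc 0 L) {κ : ℝ} (hsum : κ * L ≤ ∑ j ∈ s, t j) :
    κ * φ L ≤ ∑ j ∈ s, φ (t j) := by
  rcases hL.eq_or_lt with rfl | hL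
  · have ht0 : ∀ j ∈ s, t j = 0 := fun j hj => le_antisymm (ht j hj).2 (ht j hj).1
    rw [hφ0, mul_zero, sum_eq_zero fun j hj => by rw [ht0 j hj, hφ0]]
  have chord : ∀ j ∈ s, t j / L * φ L ≤ φ (t j) := fun j hj => by
    have hw : 0 ≤ t j / L := div_nonneg (ht j hj).1 hL.le
    have hw' : 0 ≤ 1 - t j / L := sub_nonneg.2 ((div_le_one hL).2 (ht j hj).2)
    have := hφ.2 (Set.right_mem_Icc.2 hL.le) (Set.left_mem_Icc.2 hL.le) hw hw' (by ring)
    simpa [hφ0, div_mul_cancel₀ _ hL.ne'] using this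
  calc κ * φ L ≤ (∑ j ∈ s, t j) / L * φ L :=
        mul_le_mul_of_nonneg_right ((le_div_iff₀ hL).2 hsum) hφL
    _ = ∑ j ∈ s, t j / L * φ L := by rw [sum_div, sum_mul]
    _ ≤ ∑ j ∈ s, φ (t j) := sum_le_sum chord

lemma alphaLog_one (α : ℝ) : alphaLog α 1 = 0 := by
  simp [alphaLog]

lemma alphaLog_nonneg {α ξ : ℝ} (hξ : 1 ≤ ξ) : 0 ≤ alphaLog α ξ := by
  unfold alphaLog
  split_ifs with hα
  · exact log_nonneg hξ
  rcases lt_or_gt_of_ne hα with hα | hα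
  · exact div_nonneg (sub_nonneg.2 (one_le_rpow hξ (by linarith))) (by linarith)
  · exact div_nonneg_of_nonpos (sub_nonpos.2 (rpow_le_one_of_one_le_of_nonpos hξ (by linarith)))
      (by linarith)

lemma concaveOn_alphaLog_exp {α : ℝ} (hα : 1 ≤ α) :
    ConcaveOn ℝ Set.univ fun t => alphaLog α (exp t) := by
  rcases hα.eq_or_lt with rfl | hα
  · exact (concaveOn_id convex_univ).congr fun t _ => by simp [alphaLog]
  have hexp : ConvexOn ℝ Set.univ fun t => exp ((1 - α) * t) :=
    convexOn_exp.comp_linearMap (LinearMap.mulLeft ℝ (1 - α))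
  refine (((concaveOn_const 1 convex_univ).sub hexp).smul
    (inv_nonneg.2 (sub_nonneg.2 hα.le))).congr fun t _ => ?_
  simp only [alphaLog, if_neg hα.ne', ← exp_mul, Pi.sub_apply, smul_eq_mul]
  have : 1 - α ≠ 0 := by linarith
  field_simp
  ring

lemma mul_alphaLog_le_sum_alphaLog {α : ℝ} (hα : 1 ≤ α) {ι : Type*} {s : Finset ι} {n : ℝ}
    {n' : ι → ℝ} (hn : 1 ≤ n) (hn' : ∀ j ∈ s, 1 ≤ n' j ∧ n' j ≤ n) {κ : ℝ}
    (hlog : κ * log n ≤ ∑ j ∈ s, log (n' j)) :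
    κ * alphaLog α n ≤ ∑ j ∈ s, alphaLog α (n' j) := by
  have key := ((concaveOn_alphaLog_exp hα).subset (Set.subset_univ _) (convex_Icc 0 _))
    |>.mul_le_sum_comp_of_mul_le_sum (log_nonneg hn) (by simp [alphaLog_one])
      (alphaLog_nonneg (one_le_exp (log_nonneg hn)))
      (fun j hj => ⟨log_nonneg (hn' j hj).1, log_le_log (by linarith [(hn' j hj).1]) (hn' j hj).2⟩)
      hlog
  rw [exp_log (by linarith)] at key
  rwa [sum_congr rfl fun j hj => by rw [exp_log (by linarith [(hn' j hj).1])]] at key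

/-- Let `N` be a finite set, `𝓕` a nonempty family of subsets of `N`, and
`G₁, …, G_m` a family of subsets of `N` such that each element of `N` appears in at least
`k` of the `G j`.  With `𝓕_j = {F ∩ G j : F ∈ 𝓕}`, for every `α ≥ 1`:
`k · ln_α |𝓕| ≤ Σ_j ln_α |𝓕_j|`. -/
theorem alphaLog_shearer {N : Type*} [Fintype N] [DecidableEq N]
    (m k : ℕ) (F : Finset (Finset N)) (hF : F.Nonempty)
    (G : Fin m → Finset N)
    (hcov : ∀ x : N, k ≤ (Finset.univ.filter (fun j => x ∈ G j)).card)
    (α : ℝ) (hα : 1 ≤ α) :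
    (k : ℝ) * alphaLog α (F.card : ℝ) ≤
      ∑ j : Fin m, alphaLog α (((F.image (fun A => A ∩ G j)).card : ℕ) : ℝ) := by
  have hpos : ∀ j, 0 < #(F.image (· ∩ G j)) := fun j => (hF.image _).card_pos
  have hprod : (#F : ℝ) ^ k ≤ ∏ j, (#(F.image (· ∩ G j)) : ℝ) := by
    exact_mod_cast card_pow_le_prod_card_image_inter k G hcov hF
  have hlog : (k : ℝ) * log #F ≤ ∑ j, log #(F.image (· ∩ G j)) := by
    rw [← log_pow, ← log_prod fun j _ => by positivity]
    exact log_le_log (by positivity) hprod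
  exact mul_alphaLog_le_sum_alphaLog hα (by exact_mod_cast hF.card_pos)
    (fun j _ => ⟨by exact_mod_cast hpos j, by exact_mod_cast card_image_le⟩) hlog
end

section
/- Let A be an n×n matrix with entries in {0,1} such that per(A) ≠ 0, and let r_i ≠ 0 be the number of ones in the i-th row (i = 1, …, n). Then for every α ∈ (0,1): −ln_α(1/per(A)) ≤ Σ_{i=1}^n (1/r_i) Σ_{j=1}^{r_i} ln_α(j). -/
open Finset

/-- The permanent of a square real matrix. -/
noncomputable def matPerm {n : ℕ} (A : Matrix (Fin n) (Fin n) ℝ) : ℝ :=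
  ∑ σ : Equiv.Perm (Fin n), ∏ i, A i (σ i)

/-!
Bregman's bound, in Schrijver's form: if `R` relates two finite types and `P` bijections `σ`
satisfy `R a (σ a)` for every `a`, then `P log P ≤ P ∑ₐ log (rₐ!) / rₐ`, where `rₐ` is the number
of partners of `a`. Induct on the size. Fix a row `i`, and let `N k` count the bijections with
`σ i = k`; these are the perfect bijections of the minor at `(i, k)`. Jensen for `t log t` over
the `rᵢ` partners of `i` gives `P log P - P log rᵢ ≤ ∑ₖ N k log (N k)`, and the induction
hypothesis bounds each summand. Sum over `i`: for fixed `σ` and `a`, of the minors at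
`(i, σ i)` with `i ≠ a`, row `a` loses a partner in `rₐ - 1` and keeps all of them in `n - rₐ`,
which turns the right-hand side into `n P ∑ₐ log (rₐ!) / rₐ`.

The α-logarithm enters only through `log ξ ≤ ln_α ξ` for `α < 1`, applied to `1 / per A` and to
each `j ≤ rᵢ`.
-/

open Real

lemma log_le_alphaLog {α x : ℝ} (hα : α < 1) (hx : 0 < x) : log x ≤ alphaLog α x := by
  rw [alphaLog, if_neg hα.ne, le_div_iff₀ (sub_pos.2 hα), mul_comm, ← log_rpow hx]
  exact log_le_sub_one_of_pos (rpow_pos_of_pos hx _)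

lemma log_factorial_le_sum_alphaLog {α : ℝ} (hα : α < 1) (r : ℕ) :
    log r.factorial ≤ ∑ j ∈ Icc 1 r, alphaLog α j := by
  rw [← Ico_add_one_right_eq_Icc, ← prod_Ico_id_eq_factorial, Nat.cast_prod, log_prod]
  · exact sum_le_sum fun j hj => log_le_alphaLog hα (by exact_mod_cast (mem_Ico.1 hj).1)
  · exact fun j hj => by exact_mod_cast (Nat.one_le_iff_ne_zero.1 (mem_Ico.1 hj).1)

lemma mul_log_sub_mul_log_card_le {ι : Type*} (s : Finset ι) (f : ι → ℝ)
    (hf : ∀ i ∈ s, 0 ≤ f i) :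
    (∑ i ∈ s, f i) * log (∑ i ∈ s, f i) - (∑ i ∈ s, f i) * log #s ≤
      ∑ i ∈ s, f i * log (f i) := by
  rcases s.eq_empty_or_nonempty with rfl | hs
  · simp
  have hc : (0 : ℝ) < #s := by exact_mod_cast hs.card_pos
  have hw : ∑ _i ∈ s, (#s : ℝ)⁻¹ = 1 := by simp [hc.ne']
  have hjensen := convexOn_mul_log.map_sum_le (fun _ _ => inv_nonneg.2 hc.le) hw
    (fun i hi => Set.mem_Ici.2 (hf i hi))
  simp only [smul_eq_mul, ← mul_sum, mul_assoc] at hjensen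
  set F := ∑ i ∈ s, f i
  have hF : F * log F - F * log #s = #s * ((#s : ℝ)⁻¹ * F * log ((#s : ℝ)⁻¹ * F)) := by
    rcases eq_or_ne F 0 with hF | hF
    · simp [hF]
    · rw [log_mul (inv_ne_zero hc.ne') hF, log_inv]
      field_simp
      ring
  rw [hF, ← le_div_iff₀' hc, div_eq_inv_mul]
  simpa only [mul_assoc] using hjensen

noncomputable def logFactorialRoot (r : ℕ) : ℝ := log r.factorial / r

lemma natCast_mul_logFactorialRoot (r : ℕ) : r * logFactorialRoot r = log r.factorial := by
  rcases eq_or_ne r 0 with rfl | hr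
  · simp
  · rw [logFactorialRoot, mul_div_cancel₀ _ (by exact_mod_cast hr)]

lemma log_add_log_factorial_pred {r : ℕ} (hr : r ≠ 0) :
    log r + log (r - 1).factorial = log r.factorial := by
  rw [← log_mul (by exact_mod_cast hr) (by positivity), ← Nat.cast_mul,
    Nat.mul_factorial_pred hr]

def perfectEquivs {α β : Type*} [Fintype α] [Fintype β] [DecidableEq α] [DecidableEq β]
    (R : α → β → Prop) [DecidableRel R] : Finset (α ≃ β) :=
  univ.filter fun σ => ∀ a, R a (σ a)

def rowDegree {α β : Type*} [Fintype β] (R : α → β → Prop) [DecidableRel R] (a : α) : ℕ :=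
  #(univ.filter (R a))

abbrev minor {α β : Type*} (R : α → β → Prop) (i : α) (k : β) :
    {a // a ≠ i} → {b // b ≠ k} → Prop :=
  fun a b => R a b

section RowDegree
variable {α β : Type*} [Fintype β] [DecidableEq β] {R : α → β → Prop} [DecidableRel R]

lemma rowDegree_minor {i : α} (k : β) (a : {a // a ≠ i}) :
    rowDegree (minor R i k) a = rowDegree R a - if R a k then 1 else 0 := by
  have hfilter : univ.filter (minor R i k a) = (univ.filter (R a)).subtype (· ≠ k) := by
    ext b
    simp
  rw [rowDegree, hfilter, card_subtype, filter_ne', card_erase_eq_ite, rowDegree]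
  by_cases hk : R a k <;> simp [hk]

lemma sum_erase_logFactorialRoot_rowDegree_sub {a : α} {b : β} (hb : R a b) :
    ∑ k ∈ univ.erase b, logFactorialRoot (rowDegree R a - if R a k then 1 else 0) =
      log (rowDegree R a - 1).factorial +
        (Fintype.card β - rowDegree R a) * logFactorialRoot (rowDegree R a) := by
  have hb' : b ∈ univ.filter (R a) := by simpa
  have hdeg : 1 ≤ rowDegree R a := card_pos.2 ⟨b, hb'⟩
  have hR : #((univ.erase b).filter (R a)) = rowDegree R a - 1 := by
    rw [filter_erase, card_erase_of_mem hb', rowDegree]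
  have hnR : (#((univ.erase b).filter (¬R a ·)) : ℝ) = Fintype.card β - rowDegree R a := by
    have hsum := card_filter_add_card_filter_not (s := univ.erase b) (p := R a)
    rw [hR, card_erase_of_mem (mem_univ b), card_univ] at hsum
    have hle : rowDegree R a ≤ Fintype.card β := card_le_univ _
    rw [eq_sub_iff_add_eq]
    norm_cast
    omega
  have hsplit : ∀ k, logFactorialRoot (rowDegree R a - if R a k then 1 else 0) =
      if R a k then logFactorialRoot (rowDegree R a - 1) else logFactorialRoot (rowDegree R a) :=
    fun k => by split_ifs <;> rfl
  simp_rw [hsplit]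
  rw [sum_ite, sum_const, sum_const, nsmul_eq_mul, nsmul_eq_mul, hR, hnR,
    natCast_mul_logFactorialRoot]

end RowDegree

section PerfectEquivs
variable {α β : Type*} [Fintype α] [Fintype β] [DecidableEq α] [DecidableEq β]
  {R : α → β → Prop} [DecidableRel R]

lemma card_filter_perfectEquivs_apply_eq {i : α} {k : β} (h : R i k) :
    #((perfectEquivs R).filter (· i = k)) = #(perfectEquivs (minor R i k)) := by
  refine card_bij' (fun σ hσ => σ.subtypeEquiv fun a => ?_)
    (fun τ _ => (Equiv.optionSubtypeNe i).symm.trans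
      ((Equiv.optionCongr τ).trans (Equiv.optionSubtypeNe k))) ?_ ?_ ?_ ?_
  · rw [← (mem_filter.1 hσ).2, σ.injective.ne_iff]
  · intro σ hσ
    simp only [perfectEquivs, mem_filter, mem_univ, true_and] at hσ ⊢
    exact fun a => hσ.1 a
  · intro τ hτ
    simp only [perfectEquivs, mem_filter, mem_univ, true_and] at hτ ⊢
    refine ⟨fun a => ?_, by simp⟩
    rcases eq_or_ne a i with rfl | ha
    · simpa
    · simpa [Equiv.optionSubtypeNe_symm_of_ne ha] using hτ ⟨a, ha⟩
  · intro σ hσ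
    ext a
    rcases eq_or_ne a i with rfl | ha
    · simp [(mem_filter.1 hσ).2]
    · simp [Equiv.optionSubtypeNe_symm_of_ne ha]
  · intro τ _
    ext a
    simp [Equiv.optionSubtypeNe_symm_of_ne a.2]

lemma sum_logFactorialRoot_rowDegree_minor (i : α) (k : β) :
    ∑ a : {a // a ≠ i}, logFactorialRoot (rowDegree (minor R i k) a) =
      ∑ a ∈ univ.erase i, logFactorialRoot (rowDegree R a - if R a k then 1 else 0) := by
  simp only [rowDegree_minor]
  exact (sum_subtype _ (by simp)
    fun a => logFactorialRoot (rowDegree R a - if R a k then 1 else 0)).symm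

lemma sum_sum_logFactorialRoot_rowDegree_minor {σ : α ≃ β} (hσ : σ ∈ perfectEquivs R) :
    ∑ i, ∑ a : {a // a ≠ i}, logFactorialRoot (rowDegree (minor R i (σ i)) a) =
      ∑ a, (log (rowDegree R a - 1).factorial +
        (Fintype.card β - rowDegree R a) * logFactorialRoot (rowDegree R a)) := by
  simp only [sum_logFactorialRoot_rowDegree_minor]
  rw [sum_comm' (t' := univ) (s' := fun a => univ.erase a) (by simp [ne_comm])]
  refine sum_congr rfl fun a _ => ?_
  rw [← sum_erase_logFactorialRoot_rowDegree_sub ((mem_filter.1 hσ).2 a), ← map_univ_equiv σ,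
    ← Equiv.coe_toEmbedding, ← map_erase, sum_map]

lemma mul_log_card_le_of_row (i : α) (W : β → ℝ)
    (hW : ∀ k, R i k → (#((perfectEquivs R).filter (· i = k)) : ℝ) *
      log #((perfectEquivs R).filter (· i = k)) ≤ #((perfectEquivs R).filter (· i = k)) * W k) :
    (#(perfectEquivs R) : ℝ) * log #(perfectEquivs R) ≤
      #(perfectEquivs R) * log (rowDegree R i) + ∑ σ ∈ perfectEquivs R, W (σ i) := by
  have hmaps : ∀ σ ∈ perfectEquivs R, σ i ∈ univ.filter (R i) :=
    fun σ hσ => by simpa using (mem_filter.1 hσ).2 i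
  have hP : (#(perfectEquivs R) : ℝ) =
      ∑ k ∈ univ.filter (R i), (#((perfectEquivs R).filter (· i = k)) : ℝ) := by
    exact_mod_cast card_eq_sum_card_fiberwise hmaps
  have hjensen := mul_log_sub_mul_log_card_le (univ.filter (R i))
    (fun k => (#((perfectEquivs R).filter (· i = k)) : ℝ)) (fun _ _ => Nat.cast_nonneg _)
  rw [← hP] at hjensen
  calc (#(perfectEquivs R) : ℝ) * log #(perfectEquivs R)
      ≤ #(perfectEquivs R) * log (rowDegree R i) + ∑ k ∈ univ.filter (R i),
          (#((perfectEquivs R).filter (· i = k)) : ℝ) *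
            log #((perfectEquivs R).filter (· i = k)) := by
        rw [rowDegree]
        linarith
    _ ≤ #(perfectEquivs R) * log (rowDegree R i) + ∑ k ∈ univ.filter (R i),
          (#((perfectEquivs R).filter (· i = k)) : ℝ) * W k :=
        add_le_add_right (sum_le_sum fun k hk => hW k (mem_filter.1 hk).2) _
    _ = #(perfectEquivs R) * log (rowDegree R i) + ∑ σ ∈ perfectEquivs R, W (σ i) := by
        rw [← sum_fiberwise_of_maps_to hmaps]
        congr 1
        refine sum_congr rfl fun k _ => ?_
        rw [sum_congr rfl fun σ hσ => congrArg W (mem_filter.1 hσ).2, sum_const, nsmul_eq_mul]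

variable (R) in
theorem card_mul_log_card_perfectEquivs_le :
    (#(perfectEquivs R) : ℝ) * log #(perfectEquivs R) ≤
      #(perfectEquivs R) * ∑ a, logFactorialRoot (rowDegree R a) := by
  induction hn : Fintype.card α generalizing α β with
  | zero =>
    have : IsEmpty α := Fintype.card_eq_zero_iff.1 hn
    have hP : #(perfectEquivs R) ≤ 1 := card_le_one_of_subsingleton _
    interval_cases #(perfectEquivs R) <;> simp
  | succ m ih =>
    rcases (perfectEquivs R).eq_empty_or_nonempty with hP | ⟨σ₀, hσ₀⟩
    · simp [hP]
    have hβ : Fintype.card β = m + 1 := hn ▸ (Fintype.card_congr σ₀).symm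
    have hdeg : ∀ a, rowDegree R a ≠ 0 := fun a =>
      (card_pos.2 ⟨σ₀ a, by simpa using (mem_filter.1 hσ₀).2 a⟩).ne'
    have hrow : ∀ i, (#(perfectEquivs R) : ℝ) * log #(perfectEquivs R) ≤
        #(perfectEquivs R) * log (rowDegree R i) + ∑ σ ∈ perfectEquivs R,
          ∑ a : {a // a ≠ i}, logFactorialRoot (rowDegree (minor R i (σ i)) a) :=
      fun i => mul_log_card_le_of_row i
        (fun k => ∑ a : {a // a ≠ i}, logFactorialRoot (rowDegree (minor R i k) a)) fun k hk => by
          rw [card_filter_perfectEquivs_apply_eq hk]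
          exact ih (minor R i k) (by simp [hn])
    have hrowDeg : ∀ a, log (rowDegree R a) + (log (rowDegree R a - 1).factorial +
        (Fintype.card β - rowDegree R a) * logFactorialRoot (rowDegree R a)) =
        (m + 1) * logFactorialRoot (rowDegree R a) := fun a => by
      rw [← add_assoc, log_add_log_factorial_pred (hdeg a), ← natCast_mul_logFactorialRoot, hβ]
      push_cast
      ring
    refine le_of_mul_le_mul_left ?_ (by positivity : (0 : ℝ) < m + 1)
    calc (m + 1 : ℝ) * (#(perfectEquivs R) * log #(perfectEquivs R))
        = ∑ _i : α, (#(perfectEquivs R) : ℝ) * log #(perfectEquivs R) := by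
          simp [hn]
      _ ≤ ∑ i, (#(perfectEquivs R) * log (rowDegree R i) + ∑ σ ∈ perfectEquivs R,
          ∑ a : {a // a ≠ i}, logFactorialRoot (rowDegree (minor R i (σ i)) a)) :=
          sum_le_sum fun i _ => hrow i
      _ = #(perfectEquivs R) * ∑ a, (log (rowDegree R a) + (log (rowDegree R a - 1).factorial +
          (Fintype.card β - rowDegree R a) * logFactorialRoot (rowDegree R a))) := by
          rw [sum_add_distrib, sum_comm, sum_congr rfl fun σ hσ =>
            sum_sum_logFactorialRoot_rowDegree_minor hσ, sum_const, nsmul_eq_mul, ← mul_sum,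
            ← mul_add, ← sum_add_distrib]
      _ = (m + 1) * (#(perfectEquivs R) * ∑ a, logFactorialRoot (rowDegree R a)) := by
          simp only [hrowDeg, ← mul_sum]
          ring

theorem log_card_perfectEquivs_le (h : (perfectEquivs R).Nonempty) :
    log #(perfectEquivs R) ≤ ∑ a, logFactorialRoot (rowDegree R a) :=
  le_of_mul_le_mul_left (card_mul_log_card_perfectEquivs_le R) (by exact_mod_cast h.card_pos)

end PerfectEquivs

lemma matPerm_eq_card_perfectEquivs {n : ℕ} {A : Matrix (Fin n) (Fin n) ℝ}
    [DecidableRel fun i j => A i j = 1] (h01 : ∀ i j, A i j = 0 ∨ A i j = 1) :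
    matPerm A = #(perfectEquivs fun i j => A i j = 1) := by
  have hprod : ∀ σ : Equiv.Perm (Fin n),
      ∏ i, A i (σ i) = if ∀ i, A i (σ i) = 1 then 1 else 0 := fun σ => by
    split_ifs with h
    · exact prod_eq_one fun i _ => h i
    · obtain ⟨i, hi⟩ := not_forall.1 h
      exact prod_eq_zero (mem_univ i) ((h01 i (σ i)).resolve_right hi)
  simp only [matPerm, hprod, sum_boole, perfectEquivs]

theorem neg_alphaLog_inv_permanent_le_general (n : ℕ) (A : Matrix (Fin n) (Fin n) ℝ)
    (h01 : ∀ i j, A i j = 0 ∨ A i j = 1)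
    (hper : matPerm A ≠ 0)
    (r : Fin n → ℕ)
    (hr : ∀ i, r i = (Finset.univ.filter (fun j => A i j = 1)).card)
    (α : ℝ) (hα : α ∈ Set.Ioo (0 : ℝ) 1) :
    -alphaLog α (1 / matPerm A) ≤
      ∑ i, (1 / (r i : ℝ)) * ∑ j ∈ Finset.Icc 1 (r i), alphaLog α (j : ℝ) := by
  have hα1 : α < 1 := hα.2
  -- instance search does not see through `Matrix` to decide `A i j = 1` for all `i j` at once
  let _ : DecidableRel fun i j : Fin n => A i j = 1 := fun _ _ => inferInstance
  have hperm := matPerm_eq_card_perfectEquivs h01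
  have hne : (perfectEquivs fun i j => A i j = 1).Nonempty := by
    rw [hperm, Nat.cast_ne_zero] at hper
    exact card_ne_zero.1 hper
  have hpos : 0 < matPerm A := by
    rw [hperm]
    exact_mod_cast hne.card_pos
  calc -alphaLog α (1 / matPerm A)
      ≤ log (matPerm A) := by
        rw [neg_le, ← log_inv, ← one_div]
        exact log_le_alphaLog hα1 (one_div_pos.2 hpos)
    _ ≤ ∑ i, logFactorialRoot (r i) := by
        rw [hperm]
        exact (log_card_perfectEquivs_le hne).trans_eq
          (sum_congr rfl fun i _ => congrArg logFactorialRoot (hr i).symm)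
    _ ≤ _ := sum_le_sum fun i _ => by
        rw [logFactorialRoot, div_eq_inv_mul, one_div]
        exact mul_le_mul_of_nonneg_left (log_factorial_le_sum_alphaLog hα1 _) (by positivity)

/-- Let `A` be an `n×n` `(0,1)`-matrix with `per(A) ≠ 0` and let
`r i ≠ 0` be the number of ones in row `i`.  For every `α ∈ (0, 1)`:
`-ln_α (1/per A) ≤ Σ_i (1/r_i) Σ_{j=1}^{r_i} ln_α j`. -/
theorem neg_alphaLog_inv_permanent_le (n : ℕ) (A : Matrix (Fin n) (Fin n) ℝ)
    (h01 : ∀ i j, A i j = 0 ∨ A i j = 1)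
    (hper : matPerm A ≠ 0)
    (r : Fin n → ℕ)
    (hr : ∀ i, r i = (Finset.univ.filter (fun j => A i j = 1)).card)
    (hr0 : ∀ i, r i ≠ 0)
    (α : ℝ) (hα : α ∈ Set.Ioo (0 : ℝ) 1) :
    -alphaLog α (1 / matPerm A) ≤
      ∑ i, (1 / (r i : ℝ)) * ∑ j ∈ Finset.Icc 1 (r i), alphaLog α (j : ℝ) :=
  neg_alphaLog_inv_permanent_le_general n A h01 hper r hr α hα
end
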